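/- Consider the linear program: minimize $5 y_3$ over reals $l_1, \ldots, l_5, y_3$ subject to $6 y_3 = l_1 + l_2 + l_3 + l_4 + l_5$, $l_1 + 5y_3 \geq 1$, $l_2 + 5y_3 \geq -5$, $l_3 + 5y_3 \geq 10$, $l_4 + 5y_3 \geq -10$, $l_5 + 5y_3 \geq 5$, $0 \leq y_3 \leq 1$, and all $l_i \geq 0$. The optimal value is $75/16$, attained at $(l_1, l_2, l_3, l_4, l_5, y_3) = (0, 0, 85/16, 0, 5/16, 15/16)$. -/

import Mathlib

/-- Feasibility for the dual linear program in dimension 6. -/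
def Feasible6 (l1 l2 l3 l4 l5 y3 : ℝ) : Prop :=
  6 * y3 = l1 + l2 + l3 + l4 + l5 ∧ l1 + 5 * y3 ≥ 1 ∧ l2 + 5 * y3 ≥ -5 ∧
    l3 + 5 * y3 ≥ 10 ∧ l4 + 5 * y3 ≥ -10 ∧ l5 + 5 * y3 ≥ 5 ∧
    0 ≤ y3 ∧ y3 ≤ 1 ∧ 0 ≤ l1 ∧ 0 ≤ l2 ∧ 0 ≤ l3 ∧ 0 ≤ l4 ∧ 0 ≤ l5

theorem feasible6_optimal_point : Feasible6 0 0 (85 / 16) 0 (5 / 16) (15 / 16) := by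
  unfold Feasible6
  norm_num

-- Only the lower bounds on l3 and l5 are positive; together with l1, l2, l4 ≥ 0 they force
-- 6 y3 = ∑ lᵢ ≥ (10 - 5 y3) + (5 - 5 y3), i.e. 16 y3 ≥ 15.
theorem Feasible6.fifteen_div_sixteen_le {l1 l2 l3 l4 l5 y3 : ℝ}
    (h : Feasible6 l1 l2 l3 l4 l5 y3) : 15 / 16 ≤ y3 := by
  obtain ⟨hsum, -, -, hl3, -, hl5, -, -, hl1, hl2, -, hl4, -⟩ := h
  have : (10 - 5 * y3) + (5 - 5 * y3) ≤ 6 * y3 := by linarith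
  linarith

theorem lp_dim_six :
    Feasible6 0 0 (85 / 16) 0 (5 / 16) (15 / 16) ∧ 5 * (15 / 16 : ℝ) = 75 / 16 ∧
      ∀ l1 l2 l3 l4 l5 y3 : ℝ, Feasible6 l1 l2 l3 l4 l5 y3 → 75 / 16 ≤ 5 * y3 := by
  refine ⟨feasible6_optimal_point, by norm_num, fun _ _ _ _ _ y3 h => ?_⟩
  linarith [h.fifteen_div_sixteen_le]
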